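/- arXiv:1903.02353 — 6 statements merged into one kernel-verified Lean document; each statement's English description precedes it below -/
import Mathlib

section
/- For all continuous curves P, Q : [0,1] → ℝ^d and every positive integer k, the chain of inequalities δ_H(P,Q) ≤ δ_kF(P,Q) ≤ δ_wF(P,Q) ≤ δ_F(P,Q) holds. -/
open Set Metric

noncomputable section

/-- The free space of two curves `P, Q : ℝ → ℝ^d` (restricted to the parameter
domain `[0,1] × [0,1]`) at distance threshold `ε`. -/
def freeSpace (d : ℕ) (P Q : ℝ → EuclideanSpace ℝ (Fin d)) (ε : ℝ) : Set (ℝ × ℝ) :=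
  {p | p ∈ Icc (0:ℝ) 1 ×ˢ Icc (0:ℝ) 1 ∧ ‖P p.1 - Q p.2‖ ≤ ε}

/-- A subset of `[0,1] × [0,1]` covers both parameter spaces if both of its
coordinate projections equal `[0,1]`. -/
def CoversBoth (S : Set (ℝ × ℝ)) : Prop :=
  Prod.fst '' S = Icc (0:ℝ) 1 ∧ Prod.snd '' S = Icc (0:ℝ) 1

/-- `c` is a connected component of the set `F`. -/
def IsComponentOf (F c : Set (ℝ × ℝ)) : Prop :=
  ∃ x ∈ F, c = connectedComponentIn F x

/-- The `k`-Fréchet distance: the infimum over all `ε ≥ 0` such that at most `k`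
connected components of the free space cover both parameter spaces. -/
def kFrechetDist (d : ℕ) (k : ℕ) (P Q : ℝ → EuclideanSpace ℝ (Fin d)) : ℝ :=
  sInf {ε : ℝ | 0 ≤ ε ∧ ∃ S : Set (Set (ℝ × ℝ)),
    (∀ c ∈ S, IsComponentOf (freeSpace d P Q ε) c) ∧ S.Finite ∧ S.ncard ≤ k ∧
    CoversBoth (⋃₀ S)}

/-- A reparametrization: a continuous surjection of `[0,1]` onto itself. -/
def IsReparam (σ : ℝ → ℝ) : Prop :=
  ContinuousOn σ (Icc 0 1) ∧ σ '' Icc (0:ℝ) 1 = Icc (0:ℝ) 1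

/-- The weak Fréchet distance. -/
def weakFrechetDist (d : ℕ) (P Q : ℝ → EuclideanSpace ℝ (Fin d)) : ℝ :=
  sInf {r : ℝ | ∃ σ τ : ℝ → ℝ, IsReparam σ ∧ IsReparam τ ∧
    r = ⨆ t : Icc (0:ℝ) 1, ‖P (σ ↑t) - Q (τ ↑t)‖}

/-- An orientation-preserving homeomorphism of `[0,1]`: a continuous bijection of
`[0,1]` onto itself fixing the endpoints. -/
def IsOrientedHomeo (σ : ℝ → ℝ) : Prop :=
  ContinuousOn σ (Icc 0 1) ∧ Set.BijOn σ (Icc (0:ℝ) 1) (Icc (0:ℝ) 1) ∧ σ 0 = 0 ∧ σ 1 = 1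

/-- The (strong) Fréchet distance. -/
def frechetDist (d : ℕ) (P Q : ℝ → EuclideanSpace ℝ (Fin d)) : ℝ :=
  sInf {r : ℝ | ∃ σ : ℝ → ℝ, IsOrientedHomeo σ ∧
    r = ⨆ t : Icc (0:ℝ) 1, ‖P ↑t - Q (σ ↑t)‖}

/-- The Hausdorff distance between the images of the two curves. -/
def hausdorffD (d : ℕ) (P Q : ℝ → EuclideanSpace ℝ (Fin d)) : ℝ :=
  Metric.hausdorffDist (P '' Icc (0:ℝ) 1) (Q '' Icc (0:ℝ) 1)


/-!
A pair of reparametrizations `σ, τ` traces the path `t ↦ (σ t, τ t)` through the free space at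
the level of its width; that path is connected and covers both parameter spaces, so a single
component of the free space does too, and `δ_kF ≤ δ_wF`. Conversely, every point of a covering
subset of the free space at level `ε` pairs a point of either curve with one of the other within
distance `ε`, so `δ_H ≤ δ_kF`. Finally, orientation-preserving homeomorphisms are
reparametrizations, so `δ_wF ≤ δ_F`.
-/

def KFrechetAdmissible (d k : ℕ) (P Q : ℝ → EuclideanSpace ℝ (Fin d)) (ε : ℝ) : Prop :=
  0 ≤ ε ∧ ∃ S : Set (Set (ℝ × ℝ)),
    (∀ c ∈ S, IsComponentOf (freeSpace d P Q ε) c) ∧ S.Finite ∧ S.ncard ≤ k ∧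
    CoversBoth (⋃₀ S)

lemma IsCompact.le_ciSup_of_continuousOn {α : Type*} [TopologicalSpace α] {K : Set α}
    (hK : IsCompact K) {f : α → ℝ} (hf : ContinuousOn f K) {t : α} (ht : t ∈ K) :
    f t ≤ ⨆ s : K, f s :=
  le_ciSup (f := fun s : K => f s) (image_eq_range f K ▸ hK.bddAbove_image hf) ⟨t, ht⟩

lemma isReparam_id : IsReparam id :=
  ⟨continuousOn_id, image_id _⟩

lemma IsReparam.mapsTo {σ : ℝ → ℝ} (hσ : IsReparam σ) : MapsTo σ (Icc 0 1) (Icc 0 1) :=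
  (mapsTo_image σ _).mono_right hσ.2.subset

lemma IsOrientedHomeo.isReparam {σ : ℝ → ℝ} (hσ : IsOrientedHomeo σ) : IsReparam σ :=
  ⟨hσ.1, hσ.2.1.image_eq⟩

lemma freeSpace_subset_Icc_prod (d : ℕ) (P Q : ℝ → EuclideanSpace ℝ (Fin d)) (ε : ℝ) :
    freeSpace d P Q ε ⊆ Icc 0 1 ×ˢ Icc 0 1 :=
  fun _ hp => hp.1

lemma CoversBoth.mono {S T : Set (ℝ × ℝ)} (hS : CoversBoth S) (hST : S ⊆ T)
    (hT : T ⊆ Icc 0 1 ×ˢ Icc 0 1) : CoversBoth T :=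
  ⟨((image_mono hT).trans (fst_image_prod_subset _ _)).antisymm (hS.1 ▸ image_mono hST),
    ((image_mono hT).trans (snd_image_prod_subset _ _)).antisymm (hS.2 ▸ image_mono hST)⟩

lemma coversBoth_Icc_prod : CoversBoth (Icc 0 1 ×ˢ Icc 0 1) :=
  ⟨fst_image_prod _ (nonempty_Icc.2 zero_le_one), snd_image_prod (nonempty_Icc.2 zero_le_one) _⟩

lemma IsReparam.coversBoth_image {σ τ : ℝ → ℝ} (hσ : IsReparam σ) (hτ : IsReparam τ) :
    CoversBoth ((fun t => (σ t, τ t)) '' Icc 0 1) := by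
  simp only [CoversBoth, image_image]
  exact ⟨hσ.2, hτ.2⟩

lemma hausdorffDist_image_le_of_coversBoth {α : Type*} [PseudoMetricSpace α] {f g : ℝ → α}
    {S : Set (ℝ × ℝ)} {ε : ℝ} (hε : 0 ≤ ε) (hS : CoversBoth S)
    (hdist : ∀ p ∈ S, dist (f p.1) (g p.2) ≤ ε) :
    hausdorffDist (f '' Icc 0 1) (g '' Icc 0 1) ≤ ε := by
  apply hausdorffDist_le_of_mem_dist hε
  · rintro _ ⟨s, hs, rfl⟩
    obtain ⟨p, hp, rfl⟩ := hS.1.symm ▸ hs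
    exact ⟨g p.2, mem_image_of_mem g (hS.2 ▸ mem_image_of_mem _ hp), hdist p hp⟩
  · rintro _ ⟨t, ht, rfl⟩
    obtain ⟨p, hp, rfl⟩ := hS.2.symm ▸ ht
    exact ⟨f p.1, mem_image_of_mem f (hS.1 ▸ mem_image_of_mem _ hp),
      dist_comm (f p.1) _ ▸ hdist p hp⟩

lemma hausdorffD_le_of_kFrechetAdmissible {d k : ℕ} {P Q : ℝ → EuclideanSpace ℝ (Fin d)}
    {ε : ℝ} (h : KFrechetAdmissible d k P Q ε) : hausdorffD d P Q ≤ ε := by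
  obtain ⟨hε, S, hS, -, -, hcov⟩ := h
  refine hausdorffDist_image_le_of_coversBoth hε hcov fun p hp => ?_
  obtain ⟨c, hc, hpc⟩ := mem_sUnion.1 hp
  obtain ⟨x, -, rfl⟩ := hS c hc
  exact dist_eq_norm (P p.1) (Q p.2) ▸ (connectedComponentIn_subset _ _ hpc).2

lemma kFrechetAdmissible_of_isPreconnected {d k : ℕ} {P Q : ℝ → EuclideanSpace ℝ (Fin d)}
    {ε : ℝ} (hk : 1 ≤ k) (hε : 0 ≤ ε) {γ : Set (ℝ × ℝ)} (hγ : IsPreconnected γ)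
    (hγF : γ ⊆ freeSpace d P Q ε) (hcov : CoversBoth γ) : KFrechetAdmissible d k P Q ε := by
  obtain ⟨x, hx⟩ : γ.Nonempty :=
    (hcov.1.symm ▸ nonempty_Icc.2 zero_le_one : (Prod.fst '' γ).Nonempty).of_image
  refine ⟨hε, {connectedComponentIn (freeSpace d P Q ε) x}, ?_, finite_singleton _, ?_, ?_⟩
  · rintro c rfl
    exact ⟨x, hγF hx, rfl⟩
  · rwa [ncard_singleton]
  · rw [sUnion_singleton]
    exact hcov.mono (hγ.subset_connectedComponentIn hx hγF)
      ((connectedComponentIn_subset _ _).trans (freeSpace_subset_Icc_prod d P Q ε))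

lemma kFrechetAdmissible_of_isReparam {d k : ℕ} {P Q : ℝ → EuclideanSpace ℝ (Fin d)}
    (hP : ContinuousOn P (Icc 0 1)) (hQ : ContinuousOn Q (Icc 0 1)) (hk : 1 ≤ k)
    {σ τ : ℝ → ℝ} (hσ : IsReparam σ) (hτ : IsReparam τ) :
    KFrechetAdmissible d k P Q (⨆ t : Icc (0:ℝ) 1, ‖P (σ t) - Q (τ t)‖) := by
  have hcont : ContinuousOn (fun t => ‖P (σ t) - Q (τ t)‖) (Icc 0 1) :=
    ((hP.comp hσ.1 hσ.mapsTo).sub (hQ.comp hτ.1 hτ.mapsTo)).norm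
  refine kFrechetAdmissible_of_isPreconnected hk (Real.iSup_nonneg fun _ => norm_nonneg _)
    (isPreconnected_Icc.image _ (hσ.1.prodMk hτ.1)) ?_ (hσ.coversBoth_image hτ)
  rintro _ ⟨t, ht, rfl⟩
  exact ⟨⟨hσ.mapsTo ht, hτ.mapsTo ht⟩, isCompact_Icc.le_ciSup_of_continuousOn hcont ht⟩

/-- Needed because `sInf ∅ = 0`: at the maximal distance the whole square is free. -/
lemma exists_kFrechetAdmissible {d k : ℕ} {P Q : ℝ → EuclideanSpace ℝ (Fin d)}
    (hP : ContinuousOn P (Icc 0 1)) (hQ : ContinuousOn Q (Icc 0 1)) (hk : 1 ≤ k) :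
    ∃ ε, KFrechetAdmissible d k P Q ε := by
  have hcont : ContinuousOn (fun p : ℝ × ℝ => ‖P p.1 - Q p.2‖) (Icc 0 1 ×ˢ Icc 0 1) :=
    ((hP.comp continuousOn_fst fun _ hp => hp.1).sub
      (hQ.comp continuousOn_snd fun _ hp => hp.2)).norm
  obtain ⟨M, hM⟩ := (isCompact_Icc.prod isCompact_Icc).bddAbove_image hcont
  have hfree : Icc 0 1 ×ˢ Icc 0 1 ⊆ freeSpace d P Q (max M 0) := fun p hp =>
    ⟨hp, (hM (mem_image_of_mem _ hp)).trans (le_max_left _ _)⟩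
  exact ⟨max M 0, kFrechetAdmissible_of_isPreconnected hk (le_max_right _ _)
    (isPreconnected_Icc.prod isPreconnected_Icc) hfree coversBoth_Icc_prod⟩

theorem hausdorffD_le_kFrechetDist {d k : ℕ} {P Q : ℝ → EuclideanSpace ℝ (Fin d)}
    (hP : ContinuousOn P (Icc 0 1)) (hQ : ContinuousOn Q (Icc 0 1)) (hk : 1 ≤ k) :
    hausdorffD d P Q ≤ kFrechetDist d k P Q :=
  le_csInf (exists_kFrechetAdmissible hP hQ hk) fun _ => hausdorffD_le_of_kFrechetAdmissible

theorem kFrechetDist_le_weakFrechetDist {d k : ℕ} {P Q : ℝ → EuclideanSpace ℝ (Fin d)}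
    (hP : ContinuousOn P (Icc 0 1)) (hQ : ContinuousOn Q (Icc 0 1)) (hk : 1 ≤ k) :
    kFrechetDist d k P Q ≤ weakFrechetDist d P Q := by
  refine csInf_le_csInf ⟨0, fun _ h => h.1⟩ ⟨_, id, id, isReparam_id, isReparam_id, rfl⟩ ?_
  rintro _ ⟨σ, τ, hσ, hτ, rfl⟩
  exact kFrechetAdmissible_of_isReparam hP hQ hk hσ hτ

theorem weakFrechetDist_le_frechetDist (d : ℕ) (P Q : ℝ → EuclideanSpace ℝ (Fin d)) :
    weakFrechetDist d P Q ≤ frechetDist d P Q := by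
  refine csInf_le_csInf ⟨0, ?_⟩ ⟨_, id, ⟨continuousOn_id, bijOn_id _, rfl, rfl⟩, rfl⟩ ?_
  · rintro _ ⟨σ, τ, -, -, rfl⟩
    exact Real.iSup_nonneg fun _ => norm_nonneg _
  · rintro _ ⟨σ, hσ, rfl⟩
    exact ⟨id, σ, isReparam_id, hσ.isReparam, rfl⟩

/-- For all continuous curves `P, Q : [0,1] → ℝ^d` and every positive integer `k`,
`δ_H(P,Q) ≤ δ_kF(P,Q) ≤ δ_wF(P,Q) ≤ δ_F(P,Q)`. -/
theorem hausdorff_le_kFrechet_le_weakFrechet_le_frechet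
    (d : ℕ) (P Q : ℝ → EuclideanSpace ℝ (Fin d))
    (hP : ContinuousOn P (Icc 0 1)) (hQ : ContinuousOn Q (Icc 0 1))
    (k : ℕ) (hk : 1 ≤ k) :
    hausdorffD d P Q ≤ kFrechetDist d k P Q ∧
    kFrechetDist d k P Q ≤ weakFrechetDist d P Q ∧
    weakFrechetDist d P Q ≤ frechetDist d P Q :=
  ⟨hausdorffD_le_kFrechetDist hP hQ hk, kFrechetDist_le_weakFrechetDist hP hQ hk,
    weakFrechetDist_le_frechetDist d P Q⟩
end
end

section
/- Let P, Q : [0,1] → ℝ^d be continuous curves, ε ≥ 0, and suppose σ, τ : [0,1] → [0,1] are continuous surjections with ‖P(σ(t)) − Q(τ(t))‖ ≤ ε for all t ∈ [0,1]. Then there is a single connected component of the free space F_ε(P,Q) that covers both parameter spaces (namely the component containing the connected set {(σ(t), τ(t)) : t ∈ [0,1]}). Consequently δ_1F(P,Q) ≤ δ_wF(P,Q). -/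
open Set Metric

noncomputable section

lemma IsReparam.continuous_comp_restrict {X : Type*} [TopologicalSpace X] {f : ℝ → X}
    {σ : ℝ → ℝ} (hf : ContinuousOn f (Icc 0 1)) (hσ : IsReparam σ) :
    Continuous fun t : Icc (0:ℝ) 1 => f (σ t) :=
  hf.comp_continuous hσ.1.domRestrict fun t => hσ.mapsTo t.2

lemma coversBoth_image_prodMk {σ τ : ℝ → ℝ} (hσ : IsReparam σ) (hτ : IsReparam τ) :
    CoversBoth ((fun t => (σ t, τ t)) '' Icc (0:ℝ) 1) := by
  simp only [CoversBoth, image_image]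
  exact ⟨hσ.2, hτ.2⟩

lemma coversBoth_connectedComponentIn {F S : Set (ℝ × ℝ)} {x : ℝ × ℝ}
    (hF : F ⊆ Icc (0:ℝ) 1 ×ˢ Icc (0:ℝ) 1) (hS : IsPreconnected S) (hSF : S ⊆ F)
    (hx : x ∈ S) (hcov : CoversBoth S) : CoversBoth (connectedComponentIn F x) := by
  have hSC : S ⊆ connectedComponentIn F x := hS.subset_connectedComponentIn hx hSF
  have hCF : connectedComponentIn F x ⊆ Icc (0:ℝ) 1 ×ˢ Icc (0:ℝ) 1 :=
    (connectedComponentIn_subset F x).trans hF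
  exact ⟨((image_mono hCF).trans (fst_image_prod_subset _ _)).antisymm
      (hcov.1.symm.subset.trans (image_mono hSC)),
    ((image_mono hCF).trans (snd_image_prod_subset _ _)).antisymm
      (hcov.2.symm.subset.trans (image_mono hSC))⟩

lemma image_prodMk_subset_freeSpace {d : ℕ} {P Q : ℝ → EuclideanSpace ℝ (Fin d)} {ε : ℝ}
    {σ τ : ℝ → ℝ} (hσ : IsReparam σ) (hτ : IsReparam τ)
    (hle : ∀ t ∈ Icc (0:ℝ) 1, ‖P (σ t) - Q (τ t)‖ ≤ ε) :
    (fun t => (σ t, τ t)) '' Icc (0:ℝ) 1 ⊆ freeSpace d P Q ε := by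
  rintro _ ⟨t, ht, rfl⟩
  exact ⟨⟨hσ.mapsTo ht, hτ.mapsTo ht⟩, hle t ht⟩

lemma exists_component_coversBoth {d : ℕ} {P Q : ℝ → EuclideanSpace ℝ (Fin d)} {ε : ℝ}
    {σ τ : ℝ → ℝ} (hσ : IsReparam σ) (hτ : IsReparam τ)
    (hle : ∀ t ∈ Icc (0:ℝ) 1, ‖P (σ t) - Q (τ t)‖ ≤ ε) :
    ∃ x ∈ freeSpace d P Q ε,
      (fun t => (σ t, τ t)) '' Icc (0:ℝ) 1 ⊆ connectedComponentIn (freeSpace d P Q ε) x ∧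
      CoversBoth (connectedComponentIn (freeSpace d P Q ε) x) := by
  have hS : IsPreconnected ((fun t => (σ t, τ t)) '' Icc (0:ℝ) 1) :=
    isPreconnected_Icc.image _ (hσ.1.prodMk hτ.1)
  have hSF := image_prodMk_subset_freeSpace hσ hτ hle
  have hx : (σ 0, τ 0) ∈ (fun t => (σ t, τ t)) '' Icc (0:ℝ) 1 :=
    mem_image_of_mem _ (left_mem_Icc.2 zero_le_one)
  exact ⟨_, hSF hx, hS.subset_connectedComponentIn hx hSF,
    coversBoth_connectedComponentIn (fun _ hp => hp.1) hS hSF hx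
      (coversBoth_image_prodMk hσ hτ)⟩

lemma kFrechetDist_le_of_coversBoth {d k : ℕ} {P Q : ℝ → EuclideanSpace ℝ (Fin d)} {r : ℝ}
    {x : ℝ × ℝ} (hk : 1 ≤ k) (hr : 0 ≤ r) (hx : x ∈ freeSpace d P Q r)
    (hcov : CoversBoth (connectedComponentIn (freeSpace d P Q r) x)) :
    kFrechetDist d k P Q ≤ r := by
  refine csInf_le ⟨0, fun _ h => h.1⟩ ⟨hr, {connectedComponentIn (freeSpace d P Q r) x}, ?_,
    finite_singleton _, by simpa using hk, by rwa [sUnion_singleton]⟩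
  rintro c rfl
  exact ⟨x, hx, rfl⟩

lemma kFrechetDist_one_le_iSup {d : ℕ} {P Q : ℝ → EuclideanSpace ℝ (Fin d)}
    (hP : ContinuousOn P (Icc 0 1)) (hQ : ContinuousOn Q (Icc 0 1)) {σ τ : ℝ → ℝ}
    (hσ : IsReparam σ) (hτ : IsReparam τ) :
    kFrechetDist d 1 P Q ≤ ⨆ t : Icc (0:ℝ) 1, ‖P (σ t) - Q (τ t)‖ := by
  have hcont : Continuous fun t : Icc (0:ℝ) 1 => ‖P (σ t) - Q (τ t)‖ :=
    ((hσ.continuous_comp_restrict hP).sub (hτ.continuous_comp_restrict hQ)).norm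
  have hle : ∀ t ∈ Icc (0:ℝ) 1,
      ‖P (σ t) - Q (τ t)‖ ≤ ⨆ t : Icc (0:ℝ) 1, ‖P (σ t) - Q (τ t)‖ :=
    fun t ht => le_ciSup (isCompact_range hcont).bddAbove (⟨t, ht⟩ : Icc (0:ℝ) 1)
  obtain ⟨x, hx, -, hcov⟩ := exists_component_coversBoth hσ hτ hle
  exact kFrechetDist_le_of_coversBoth le_rfl (Real.iSup_nonneg fun _ => norm_nonneg _) hx hcov

theorem exists_component_coversBoth_of_reparams_general
    (d : ℕ) (P Q : ℝ → EuclideanSpace ℝ (Fin d))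
    (hP : ContinuousOn P (Icc 0 1)) (hQ : ContinuousOn Q (Icc 0 1))
    (ε : ℝ) (σ τ : ℝ → ℝ)
    (hσ : IsReparam σ) (hτ : IsReparam τ)
    (hle : ∀ t ∈ Icc (0:ℝ) 1, ‖P (σ t) - Q (τ t)‖ ≤ ε) :
    (∃ x ∈ freeSpace d P Q ε,
      (fun t => (σ t, τ t)) '' Icc (0:ℝ) 1 ⊆ connectedComponentIn (freeSpace d P Q ε) x ∧
      CoversBoth (connectedComponentIn (freeSpace d P Q ε) x)) ∧
    kFrechetDist d 1 P Q ≤ weakFrechetDist d P Q := by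
  refine ⟨exists_component_coversBoth hσ hτ hle, le_csInf ⟨_, σ, τ, hσ, hτ, rfl⟩ ?_⟩
  rintro _ ⟨σ', τ', hσ', hτ', rfl⟩
  exact kFrechetDist_one_le_iSup hP hQ hσ' hτ'

/-- If `σ, τ` are continuous surjections of `[0,1]` with `‖P (σ t) - Q (τ t)‖ ≤ ε`
for all `t ∈ [0,1]`, then a single connected component of the free space
`F_ε(P,Q)` — namely the one containing the connected set `{(σ t, τ t) : t ∈ [0,1]}`
— covers both parameter spaces. Consequently `δ_1F(P,Q) ≤ δ_wF(P,Q)`. -/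
theorem exists_component_coversBoth_of_reparams
    (d : ℕ) (P Q : ℝ → EuclideanSpace ℝ (Fin d))
    (hP : ContinuousOn P (Icc 0 1)) (hQ : ContinuousOn Q (Icc 0 1))
    (ε : ℝ) (hε : 0 ≤ ε) (σ τ : ℝ → ℝ)
    (hσ : IsReparam σ) (hτ : IsReparam τ)
    (hle : ∀ t ∈ Icc (0:ℝ) 1, ‖P (σ t) - Q (τ t)‖ ≤ ε) :
    (∃ x ∈ freeSpace d P Q ε,
      (fun t => (σ t, τ t)) '' Icc (0:ℝ) 1 ⊆ connectedComponentIn (freeSpace d P Q ε) x ∧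
      CoversBoth (connectedComponentIn (freeSpace d P Q ε) x)) ∧
    kFrechetDist d 1 P Q ≤ weakFrechetDist d P Q :=
  exists_component_coversBoth_of_reparams_general d P Q hP hQ ε σ τ hσ hτ hle
end
end

section
/- Let P, Q : [0,1] → ℝ^d be curves, let [a,b] ⊆ [0,1] and [c,d] ⊆ [0,1] be subintervals, and suppose P is affine on [a,b] and Q is affine on [c,d]. Then for every ε ≥ 0 the set {(s,t) ∈ [a,b]×[c,d] : ‖P(s) − Q(t)‖ ≤ ε} is convex. -/
open Set Metric

noncomputable section

/-- `P` is affine on the interval `[a,b]`: it agrees there with an affine map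
`s ↦ u + s • v`. -/
def IsAffineOn {d : ℕ} (P : ℝ → EuclideanSpace ℝ (Fin d)) (a b : ℝ) : Prop :=
  ∃ u v : EuclideanSpace ℝ (Fin d), ∀ s ∈ Icc a b, P s = u + s • v

/-- `P` is a polygonal curve with `n` segments: it is continuous on `[0,1]` and
there is a partition `0 = s_0 < s_1 < ⋯ < s_n = 1` such that `P` is affine on each
subinterval `[s_{i-1}, s_i]`. -/
def IsPolygonal (d n : ℕ) (P : ℝ → EuclideanSpace ℝ (Fin d)) : Prop :=
  ContinuousOn P (Icc 0 1) ∧ ∃ s : Fin (n + 1) → ℝ,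
    s 0 = 0 ∧ s (Fin.last n) = 1 ∧ StrictMono s ∧
    ∀ i : Fin n, IsAffineOn P (s i.castSucc) (s i.succ)

section AffineFreeSpace

variable {E F G : Type*} [AddCommGroup E] [Module ℝ E] [AddCommGroup F] [Module ℝ F]
  [SeminormedAddCommGroup G] [NormedSpace ℝ G]

theorem Convex.sep_norm_le_of_eqOn_affineMap {s : Set E} (hs : Convex ℝ s) {f : E → G}
    (g : E →ᵃ[ℝ] G) (hfg : EqOn f g s) (r : ℝ) : Convex ℝ {x ∈ s | ‖f x‖ ≤ r} := by
  have hset : {x ∈ s | ‖f x‖ ≤ r} = s ∩ g ⁻¹' closedBall 0 r := by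
    ext x
    exact and_congr_right fun hx => by rw [mem_preimage, mem_closedBall_zero_iff, hfg hx]
  rw [hset]
  exact hs.inter ((convex_closedBall 0 r).affine_preimage g)

theorem Convex.prod_sep_norm_sub_le_of_eqOn_affineMap {s : Set E} {t : Set F}
    (hs : Convex ℝ s) (ht : Convex ℝ t) {P : E → G} {Q : F → G} (f : E →ᵃ[ℝ] G)
    (g : F →ᵃ[ℝ] G) (hP : EqOn P f s) (hQ : EqOn Q g t) (r : ℝ) :
    Convex ℝ {p ∈ s ×ˢ t | ‖P p.1 - Q p.2‖ ≤ r} := by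
  have hPQ : EqOn (fun p : E × F => P p.1 - Q p.2)
      ⇑(f.comp (AffineMap.fst : E × F →ᵃ[ℝ] E) - g.comp (AffineMap.snd : E × F →ᵃ[ℝ] F))
      (s ×ˢ t) :=
    fun p hp => by simp [hP hp.1, hQ hp.2]
  exact (hs.prod ht).sep_norm_le_of_eqOn_affineMap _ hPQ r

end AffineFreeSpace

theorem IsAffineOn.exists_eqOn_affineMap {d : ℕ} {P : ℝ → EuclideanSpace ℝ (Fin d)} {a b : ℝ}
    (hP : IsAffineOn P a b) : ∃ g : ℝ →ᵃ[ℝ] EuclideanSpace ℝ (Fin d), EqOn P g (Icc a b) := by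
  obtain ⟨u, v, hP⟩ := hP
  refine ⟨(LinearMap.toSpanSingleton ℝ _ v).toAffineMap + AffineMap.const ℝ ℝ u, fun s hs => ?_⟩
  simp [hP s hs, add_comm]

theorem freeSpace_cell_convex_general
    (d : ℕ) (P Q : ℝ → EuclideanSpace ℝ (Fin d))
    (a b c e : ℝ)
    (hP : IsAffineOn P a b) (hQ : IsAffineOn Q c e)
    (ε : ℝ) :
    Convex ℝ {p : ℝ × ℝ | p ∈ Icc a b ×ˢ Icc c e ∧ ‖P p.1 - Q p.2‖ ≤ ε} := by
  obtain ⟨f, hf⟩ := hP.exists_eqOn_affineMap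
  obtain ⟨g, hg⟩ := hQ.exists_eqOn_affineMap
  exact (convex_Icc a b).prod_sep_norm_sub_le_of_eqOn_affineMap (convex_Icc c e) f g hf hg ε

/-- If `P` is affine on `[a,b] ⊆ [0,1]` and `Q` is affine on `[c,e] ⊆ [0,1]`, then
for every `ε ≥ 0` the set `{(s,t) ∈ [a,b]×[c,e] : ‖P s - Q t‖ ≤ ε}` is convex. -/
theorem freeSpace_cell_convex
    (d : ℕ) (P Q : ℝ → EuclideanSpace ℝ (Fin d))
    (a b c e : ℝ) (hab : Icc a b ⊆ Icc (0:ℝ) 1) (hce : Icc c e ⊆ Icc (0:ℝ) 1)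
    (hP : IsAffineOn P a b) (hQ : IsAffineOn Q c e)
    (ε : ℝ) (hε : 0 ≤ ε) :
    Convex ℝ {p : ℝ × ℝ | p ∈ Icc a b ×ˢ Icc c e ∧ ‖P p.1 - Q p.2‖ ≤ ε} :=
  freeSpace_cell_convex_general d P Q a b c e hP hQ ε
end
end

section
/- Let P : [0,1] → ℝ^d be a polygonal curve with n segments and Q : [0,1] → ℝ^d a polygonal curve with m segments, and let ε ≥ 0. Then the free space F_ε(P,Q) has at most n·m connected components. -/
open Set Metric

noncomputable section

/-!
The partitions of `P` and `Q` into segments cut `[0,1]²` into `n·m` cells. On a cell both curves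
are affine, so `(s, t) ↦ P s - Q t` is affine there and the part of the free space in the cell is
convex, hence lies in a single connected component. Every component meets some cell.
-/

theorem Monotone.exists_mem_Icc_castSucc_succ {α : Type*} [LinearOrder α] :
    ∀ {n : ℕ} {s : Fin (n + 1) → α}, Monotone s → n ≠ 0 →
      ∀ x ∈ Icc (s 0) (s (Fin.last n)), ∃ i : Fin n, x ∈ Icc (s i.castSucc) (s i.succ)
  | 0, _, _, hn, _, _ => absurd rfl hn
  | 1, _, _, _, _, hx => ⟨0, hx⟩
  | n + 2, s, hs, _, x, hx => by
    rcases le_or_gt x (s (Fin.last (n + 1)).castSucc) with hle | hgt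
    · obtain ⟨i, hi⟩ := (hs.comp Fin.strictMono_castSucc.monotone).exists_mem_Icc_castSucc_succ
        n.succ_ne_zero x ⟨hx.1, hle⟩
      exact ⟨i.castSucc, hi⟩
    · exact ⟨Fin.last (n + 1), hgt.le, hx.2⟩

theorem StrictMono.exists_mem_Icc_castSucc_succ {n : ℕ} {s : Fin (n + 1) → ℝ} (hs : StrictMono s)
    (h0 : s 0 = 0) (h1 : s (Fin.last n) = 1) {x : ℝ} (hx : x ∈ Icc (0 : ℝ) 1) :
    ∃ i : Fin n, x ∈ Icc (s i.castSucc) (s i.succ) := by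
  refine hs.monotone.exists_mem_Icc_castSucc_succ ?_ x (h0 ▸ h1 ▸ hx)
  rintro rfl
  exact zero_ne_one (h0.symm.trans h1)

theorem setOf_connectedComponentIn_finite_and_ncard_le {X ι : Type*} [TopologicalSpace X]
    [Finite ι] {F : Set X} (K : ι → Set X) (hK : ∀ i, IsPreconnected (K i))
    (hKF : ∀ i, K i ⊆ F) (hcover : F ⊆ ⋃ i, K i) :
    {c | ∃ x ∈ F, c = connectedComponentIn F x}.Finite ∧
      {c | ∃ x ∈ F, c = connectedComponentIn F x}.ncard ≤ Nat.card ι := by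
  -- `g i` is the component of `F` containing `K i`, written without choosing a point of `K i`
  set g : ι → Set X := fun i => ⋃ y ∈ K i, connectedComponentIn F y
  have hsub : {c | ∃ x ∈ F, c = connectedComponentIn F x} ⊆ range g := by
    rintro c ⟨x, hxF, rfl⟩
    obtain ⟨i, hxi⟩ := mem_iUnion.1 (hcover hxF)
    refine ⟨i, subset_antisymm (iUnion₂_subset fun y hy => ?_) (subset_biUnion_of_mem hxi)⟩
    rw [connectedComponentIn_eq ((hK i).subset_connectedComponentIn hy (hKF i) hxi)]
  refine ⟨(finite_range g).subset hsub, (ncard_le_ncard hsub (finite_range g)).trans ?_⟩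
  rw [← Nat.card_coe_set_eq]
  exact Finite.card_range_le g

theorem IsAffineOn.convex_inter_freeSpace {d : ℕ} {P Q : ℝ → EuclideanSpace ℝ (Fin d)}
    {a b a' b' : ℝ} (hP : IsAffineOn P a b) (hQ : IsAffineOn Q a' b') (ε : ℝ) :
    Convex ℝ ((Icc a b ×ˢ Icc a' b') ∩ freeSpace d P Q ε) := by
  obtain ⟨u, v, hu⟩ := hP
  obtain ⟨w, z, hw⟩ := hQ
  set L : ℝ × ℝ →ₗ[ℝ] EuclideanSpace ℝ (Fin d) :=
    (LinearMap.fst ℝ ℝ ℝ).smulRight v - (LinearMap.snd ℝ ℝ ℝ).smulRight z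
  have hconv : Convex ℝ ((Icc a b ×ˢ Icc a' b') ∩
      ((Icc 0 1 ×ˢ Icc 0 1) ∩ L ⁻¹' closedBall (w - u) ε)) :=
    ((convex_Icc a b).prod (convex_Icc a' b')).inter
      (((convex_Icc 0 1).prod (convex_Icc 0 1)).inter ((convex_closedBall _ _).linear_preimage L))
  convert hconv using 1
  ext ⟨x, y⟩
  simp only [freeSpace, mem_inter_iff, mem_prod, mem_ofPred_eq, mem_preimage, mem_closedBall,
    dist_eq_norm, and_congr_right_iff]
  rintro ⟨hx, hy⟩
  have hPQ : P x - Q y = L (x, y) - (w - u) := by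
    rw [hu x hx, hw y hy]
    simp only [L, LinearMap.sub_apply, LinearMap.smulRight_apply, LinearMap.fst_apply,
      LinearMap.snd_apply]
    abel
  simp only [hPQ, implies_true]

theorem freeSpace_components_le_general
    (d n m : ℕ) (P Q : ℝ → EuclideanSpace ℝ (Fin d))
    (hP : IsPolygonal d n P) (hQ : IsPolygonal d m Q)
    (ε : ℝ) :
    {c : Set (ℝ × ℝ) | IsComponentOf (freeSpace d P Q ε) c}.Finite ∧
    {c : Set (ℝ × ℝ) | IsComponentOf (freeSpace d P Q ε) c}.ncard ≤ n * m := by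
  obtain ⟨-, s, hs0, hs1, hs, hPs⟩ := hP
  obtain ⟨-, t, ht0, ht1, ht, hQt⟩ := hQ
  have hcells := setOf_connectedComponentIn_finite_and_ncard_le
    (fun ij : Fin n × Fin m => (Icc (s ij.1.castSucc) (s ij.1.succ) ×ˢ
      Icc (t ij.2.castSucc) (t ij.2.succ)) ∩ freeSpace d P Q ε)
    (fun ij => ((hPs ij.1).convex_inter_freeSpace (hQt ij.2) ε).isPreconnected)
    (fun _ => inter_subset_right)
    (fun p hp => by
      obtain ⟨i, hi⟩ := hs.exists_mem_Icc_castSucc_succ hs0 hs1 hp.1.1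
      obtain ⟨j, hj⟩ := ht.exists_mem_Icc_castSucc_succ ht0 ht1 hp.1.2
      exact mem_iUnion.2 ⟨(i, j), ⟨hi, hj⟩, hp⟩)
  rwa [Nat.card_eq_fintype_card, Fintype.card_prod, Fintype.card_fin, Fintype.card_fin] at hcells

/-- If `P` is a polygonal curve with `n` segments and `Q` a polygonal curve with
`m` segments, then for every `ε ≥ 0` the free space `F_ε(P,Q)` has at most `n·m`
connected components. -/
theorem freeSpace_components_le
    (d n m : ℕ) (P Q : ℝ → EuclideanSpace ℝ (Fin d))
    (hP : IsPolygonal d n P) (hQ : IsPolygonal d m Q)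
    (ε : ℝ) (hε : 0 ≤ ε) :
    {c : Set (ℝ × ℝ) | IsComponentOf (freeSpace d P Q ε) c}.Finite ∧
    {c : Set (ℝ × ℝ) | IsComponentOf (freeSpace d P Q ε) c}.ncard ≤ n * m :=
  freeSpace_components_le_general d n m P Q hP hQ ε
end
end

section
/- Let P : [0,1] → ℝ^d be a polygonal curve with n segments and Q : [0,1] → ℝ^d a polygonal curve with m segments. Then for every integer k ≥ n·m, the k-Fréchet distance equals the Hausdorff distance: δ_kF(P,Q) = δ_H(P,Q). -/
open Set Metric

noncomputable section

/-! For `ε` above the Hausdorff distance every point of either curve is within `ε` of the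
other curve, so the whole free space projects onto both parameter intervals and the family of
all its components covers both; conversely a cover at level `ε` forces `ε ≥ δ_H`. On each of
the `n * m` rectangles of the product of the two partitions both curves are affine, so the free
space inside the rectangle is convex. Every component contains such a nonempty convex piece,
and a piece lies in only one component, so there are at most `n * m` components. -/

lemma exists_castSucc_le_le_succ {α : Type*} [LinearOrder α] {n : ℕ} (s : Fin (n + 2) → α)
    {x : α} (h0 : s 0 ≤ x) (hx : x ≤ s (Fin.last (n + 1))) :
    ∃ i : Fin (n + 1), s i.castSucc ≤ x ∧ x ≤ s i.succ := by
  induction n with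
  | zero => exact ⟨0, h0, hx⟩
  | succ n ih =>
    by_cases hlast : x ≤ s (Fin.last (n + 1)).castSucc
    · obtain ⟨i, hi⟩ := ih (s ∘ Fin.castSucc) h0 hlast
      exact ⟨i.castSucc, hi⟩
    · exact ⟨Fin.last (n + 1), (not_le.1 hlast).le, hx⟩

lemma exists_mem_Icc_of_partition {n : ℕ} {s : Fin (n + 1) → ℝ} (h0 : s 0 = 0)
    (h1 : s (Fin.last n) = 1) {x : ℝ} (hx : x ∈ Icc (0 : ℝ) 1) :
    ∃ i : Fin n, x ∈ Icc (s i.castSucc) (s i.succ) := by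
  obtain _ | n := n
  · exact absurd (h0.symm.trans h1) zero_ne_one
  · exact exists_castSucc_le_le_succ s (h0 ▸ hx.1) (h1 ▸ hx.2)

lemma csInf_eq_of_forall_ge_of_Ioi_subset {α : Type*} [ConditionallyCompleteLinearOrder α]
    [DenselyOrdered α] [NoMaxOrder α] {s : Set α} {b : α} (H : ∀ a ∈ s, b ≤ a)
    (hs : Ioi b ⊆ s) : sInf s = b :=
  csInf_eq_of_forall_ge_of_forall_gt_exists_lt (let ⟨c, hc⟩ := exists_gt b; ⟨c, hs hc⟩) H
    fun _ hw => let ⟨a, hba, haw⟩ := exists_between hw; ⟨a, hs hba, haw⟩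

lemma convex_setOf_norm_affine_sub_affine_le {E : Type*} [NormedAddCommGroup E]
    [NormedSpace ℝ E] (u v u' v' : E) (ε : ℝ) :
    Convex ℝ {p : ℝ × ℝ | ‖(u + p.1 • v) - (u' + p.2 • v')‖ ≤ ε} := by
  let L : ℝ × ℝ →ₗ[ℝ] E :=
    (LinearMap.fst ℝ ℝ ℝ).smulRight v - (LinearMap.snd ℝ ℝ ℝ).smulRight v'
  have : {p : ℝ × ℝ | ‖(u + p.1 • v) - (u' + p.2 • v')‖ ≤ ε} =
      L ⁻¹' closedBall (u' - u) ε := by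
    ext p
    rw [mem_preimage, mem_closedBall, dist_eq_norm]
    show _ ≤ ε ↔ _
    congr! 2
    simp [L]
    abel
  exact this ▸ (convex_closedBall _ _).linear_preimage L

lemma IsComponentOf.subset {F c : Set (ℝ × ℝ)} (hc : IsComponentOf F c) : c ⊆ F := by
  obtain ⟨x, -, rfl⟩ := hc
  exact connectedComponentIn_subset F x

lemma sUnion_setOf_isComponentOf (F : Set (ℝ × ℝ)) : ⋃₀ {c | IsComponentOf F c} = F :=
  (sUnion_subset fun _ hc => hc.subset).antisymm fun x hx =>
    ⟨connectedComponentIn F x, ⟨x, hx, rfl⟩, mem_connectedComponentIn hx⟩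

lemma setOf_isComponentOf_finite_and_ncard_le {ι : Type*} [Finite ι] {F : Set (ℝ × ℝ)}
    {C : ι → Set (ℝ × ℝ)} (hC : ∀ i, IsPreconnected (C i)) (hCF : ∀ i, C i ⊆ F)
    (hF : F ⊆ ⋃ i, C i) :
    {c | IsComponentOf F c}.Finite ∧ {c | IsComponentOf F c}.ncard ≤ Nat.card ι := by
  classical
  let f : ι → Set (ℝ × ℝ) := fun i =>
    if h : (C i).Nonempty then connectedComponentIn F h.some else ∅
  have hsub : {c | IsComponentOf F c} ⊆ range f := by
    rintro c ⟨x, hx, rfl⟩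
    obtain ⟨i, hxi⟩ := mem_iUnion.1 (hF hx)
    have hne : (C i).Nonempty := ⟨x, hxi⟩
    refine ⟨i, ?_⟩
    simp only [f, dif_pos hne]
    exact (connectedComponentIn_eq
      ((hC i).subset_connectedComponentIn hxi (hCF i) hne.some_mem)).symm
  refine ⟨(finite_range f).subset hsub, (ncard_le_ncard hsub (finite_range f)).trans ?_⟩
  rw [← image_univ, ← ncard_univ]
  exact ncard_image_le

section FreeSpace

variable {d : ℕ} {P Q : ℝ → EuclideanSpace ℝ (Fin d)}

lemma convex_prod_inter_freeSpace {a b a' b' : ℝ} (hP : IsAffineOn P a b)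
    (hQ : IsAffineOn Q a' b') (ε : ℝ) :
    Convex ℝ (Icc a b ×ˢ Icc a' b' ∩ freeSpace d P Q ε) := by
  obtain ⟨u, v, hu⟩ := hP
  obtain ⟨u', v', hu'⟩ := hQ
  have : Icc a b ×ˢ Icc a' b' ∩ freeSpace d P Q ε = Icc a b ×ˢ Icc a' b' ∩
      (Icc 0 1 ×ˢ Icc 0 1 ∩ {p | ‖(u + p.1 • v) - (u' + p.2 • v')‖ ≤ ε}) := by
    ext p
    simp only [freeSpace, mem_inter_iff, mem_prod, mem_ofPred_eq]
    constructor
    · rintro ⟨⟨h1, h2⟩, h01, hd⟩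
      exact ⟨⟨h1, h2⟩, h01, hu p.1 h1 ▸ hu' p.2 h2 ▸ hd⟩
    · rintro ⟨⟨h1, h2⟩, h01, hd⟩
      exact ⟨⟨h1, h2⟩, h01, (hu p.1 h1).symm ▸ (hu' p.2 h2).symm ▸ hd⟩
  rw [this]
  exact ((convex_Icc _ _).prod (convex_Icc _ _)).inter
    (((convex_Icc _ _).prod (convex_Icc _ _)).inter
      (convex_setOf_norm_affine_sub_affine_le u v u' v' ε))

lemma exists_isPreconnected_cover_freeSpace {n m : ℕ} (hP : IsPolygonal d n P)
    (hQ : IsPolygonal d m Q) (ε : ℝ) :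
    ∃ C : Fin n × Fin m → Set (ℝ × ℝ), (∀ ij, IsPreconnected (C ij)) ∧
      (∀ ij, C ij ⊆ freeSpace d P Q ε) ∧ freeSpace d P Q ε ⊆ ⋃ ij, C ij := by
  obtain ⟨-, s, hs0, hs1, -, hsP⟩ := hP
  obtain ⟨-, t, ht0, ht1, -, htQ⟩ := hQ
  refine ⟨fun ij => Icc (s ij.1.castSucc) (s ij.1.succ) ×ˢ Icc (t ij.2.castSucc) (t ij.2.succ)
    ∩ freeSpace d P Q ε,
    fun ij => (convex_prod_inter_freeSpace (hsP ij.1) (htQ ij.2) ε).isPreconnected,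
    fun _ => inter_subset_right, fun p hp => ?_⟩
  obtain ⟨i, hi⟩ := exists_mem_Icc_of_partition hs0 hs1 hp.1.1
  obtain ⟨j, hj⟩ := exists_mem_Icc_of_partition ht0 ht1 hp.1.2
  exact mem_iUnion.2 ⟨(i, j), ⟨hi, hj⟩, hp⟩

lemma setOf_isComponentOf_freeSpace_finite_and_ncard_le {n m : ℕ} (hP : IsPolygonal d n P)
    (hQ : IsPolygonal d m Q) (ε : ℝ) :
    {c | IsComponentOf (freeSpace d P Q ε) c}.Finite ∧
      {c | IsComponentOf (freeSpace d P Q ε) c}.ncard ≤ n * m := by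
  obtain ⟨C, hC, hCF, hF⟩ := exists_isPreconnected_cover_freeSpace hP hQ ε
  simpa using setOf_isComponentOf_finite_and_ncard_le hC hCF hF

lemma hausdorffD_le_of_coversBoth {ε : ℝ} {S : Set (ℝ × ℝ)} (hε : 0 ≤ ε)
    (hS : S ⊆ freeSpace d P Q ε) (hcov : CoversBoth S) : hausdorffD d P Q ≤ ε := by
  obtain ⟨hcov₁, hcov₂⟩ := hcov
  apply hausdorffDist_le_of_infDist hε
  · rintro _ ⟨s, hs, rfl⟩
    obtain ⟨p, hp, rfl⟩ := hcov₁ ▸ hs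
    obtain ⟨⟨-, hp₂⟩, hpε⟩ := hS hp
    exact (infDist_le_dist_of_mem (mem_image_of_mem Q hp₂)).trans (by rwa [dist_eq_norm])
  · rintro _ ⟨t, ht, rfl⟩
    obtain ⟨p, hp, rfl⟩ := hcov₂ ▸ ht
    obtain ⟨⟨hp₁, -⟩, hpε⟩ := hS hp
    exact (infDist_le_dist_of_mem (mem_image_of_mem P hp₁)).trans
      (by rwa [dist_eq_norm, norm_sub_rev])

lemma hausdorffD_comm : hausdorffD d Q P = hausdorffD d P Q := hausdorffDist_comm

lemma exists_norm_sub_le_of_hausdorffD_lt {ε : ℝ} (hP : ContinuousOn P (Icc 0 1))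
    (hQ : ContinuousOn Q (Icc 0 1)) (h : hausdorffD d P Q < ε) {s : ℝ}
    (hs : s ∈ Icc (0 : ℝ) 1) :
    ∃ t ∈ Icc (0 : ℝ) 1, ‖P s - Q t‖ ≤ ε := by
  have hfin : hausdorffEDist (P '' Icc 0 1) (Q '' Icc 0 1) ≠ ⊤ :=
    hausdorffEDist_ne_top_of_nonempty_of_bounded ((nonempty_Icc.2 zero_le_one).image P)
      ((nonempty_Icc.2 zero_le_one).image Q) (isCompact_Icc.image_of_continuousOn hP).isBounded
      (isCompact_Icc.image_of_continuousOn hQ).isBounded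
  obtain ⟨_, ⟨t, ht, rfl⟩, hdist⟩ :=
    exists_dist_lt_of_hausdorffDist_lt (mem_image_of_mem P hs) h hfin
  exact ⟨t, ht, by rw [← dist_eq_norm]; exact hdist.le⟩

lemma coversBoth_freeSpace_of_hausdorffD_lt {ε : ℝ} (hP : ContinuousOn P (Icc 0 1))
    (hQ : ContinuousOn Q (Icc 0 1)) (h : hausdorffD d P Q < ε) :
    CoversBoth (freeSpace d P Q ε) := by
  refine ⟨(image_subset_iff.2 fun p hp => hp.1.1).antisymm fun s hs => ?_,
    (image_subset_iff.2 fun p hp => hp.1.2).antisymm fun t ht => ?_⟩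
  · obtain ⟨t, ht, hst⟩ := exists_norm_sub_le_of_hausdorffD_lt hP hQ h hs
    exact ⟨(s, t), ⟨⟨hs, ht⟩, hst⟩, rfl⟩
  · obtain ⟨s, hs, hts⟩ := exists_norm_sub_le_of_hausdorffD_lt hQ hP (hausdorffD_comm ▸ h) ht
    exact ⟨(s, t), ⟨⟨hs, ht⟩, norm_sub_rev (P s) (Q t) ▸ hts⟩, rfl⟩

end FreeSpace

/-- For polygonal curves `P` with `n` segments and `Q` with `m` segments, and every
integer `k ≥ n·m`, the `k`-Fréchet distance equals the Hausdorff distance. -/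
theorem kFrechet_eq_hausdorff_of_large_k
    (d n m : ℕ) (P Q : ℝ → EuclideanSpace ℝ (Fin d))
    (hP : IsPolygonal d n P) (hQ : IsPolygonal d m Q)
    (k : ℕ) (hk : n * m ≤ k) :
    kFrechetDist d k P Q = hausdorffD d P Q := by
  refine csInf_eq_of_forall_ge_of_Ioi_subset ?_ fun ε hε => ?_
  · rintro ε ⟨hε, S, hS, -, -, hcov⟩
    exact hausdorffD_le_of_coversBoth hε (sUnion_subset fun c hc => (hS c hc).subset) hcov
  · obtain ⟨hfin, hcard⟩ := setOf_isComponentOf_freeSpace_finite_and_ncard_le hP hQ ε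
    refine ⟨hausdorffDist_nonneg.trans (le_of_lt hε), {c | IsComponentOf (freeSpace d P Q ε) c},
      fun c hc => hc, hfin, hcard.trans hk, ?_⟩
    rw [sUnion_setOf_isComponentOf]
    exact coversBoth_freeSpace_of_hausdorffD_lt hP.1 hQ.1 hε
end
end

section
/- In the box-problem construction from a 3-SAT formula, the total number of boxes equals 4n + 2(m₁ + 2m₂ + 3m₃) = 2k, where n is the number of variables, m_i is the number of clauses with exactly i literals, and k = 2n + m₁ + 2m₂ + 3m₃; moreover, for every integer i ∈ {1, …, 2n+s⁺_n+s⁻_n}, the unit interval (i, i+1) on the left edge of B can be covered by exactly two of the boxes, one labelled with a variable v and the other labelled ¬v for the same variable v. -/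
open Set Finset

noncomputable section

/-- A 3-SAT instance: `n` variables, `m` clauses, each clause a finite set of
literals, a literal being a pair (variable, sign) with `true` = positive. -/
abbrev Clauses (n m : ℕ) := Fin m → Finset (Fin n × Bool)

/-- `litCount C i s` is the number of clauses containing the literal `(i, s)`
(so `a⁺_i = litCount C i true` and `a⁻_i = litCount C i false`). -/
def litCount {n m : ℕ} (C : Clauses n m) (i : Fin n) (s : Bool) : ℕ :=
  (Finset.univ.filter (fun h : Fin m => (i, s) ∈ C h)).card

/-- `sCount C s t = Σ_{k < t} litCount C k s`; with 1-indexed variables this is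
`s⁺_{t}` (for `s = true`), e.g. `sCount C true n = s⁺_n` and, for a 0-indexed
variable `i`, `sCount C true i = s⁺_{i-1}`. -/
def sCount {n m : ℕ} (C : Clauses n m) (s : Bool) (t : ℕ) : ℕ :=
  ∑ k ∈ Finset.univ.filter (fun k : Fin n => (k : ℕ) < t), litCount C k s

/-- The formula is satisfiable: some assignment makes every clause contain a true
literal. -/
def SatSatisfiable {n m : ℕ} (C : Clauses n m) : Prop :=
  ∃ f : Fin n → Bool, ∀ h : Fin m, ∃ l ∈ C h, f l.1 = l.2

/-- The set of labelled boxes of the box-problem construction. A labelled box is a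
pair `((x, y, w), ℓ)` of an axis-aligned unit-height box with bottom-left corner
`(x, y)` and width `w`, and a label `ℓ = (i, s)` meaning the literal `v_i` (if
`s = true`) or `¬v_i` (if `s = false`). The functions `jpos i` and `jneg i`
enumerate (with values in `{1, …, a⁺_i}` resp. `{1, …, a⁻_i}`) the clauses
containing `v_i` positively resp. negatively. -/
def boxSet {n m : ℕ} (C : Clauses n m) (jpos jneg : Fin n → Fin m → ℕ) :
    Set ((ℝ × ℝ × ℝ) × (Fin n × Bool)) :=
  {b |
    -- (i) variable boxes
    (∃ i : Fin n, b = ((((i : ℕ) + 1 : ℝ), ((i : ℕ) + 1 : ℝ), 1), (i, false)))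
    ∨ (∃ i : Fin n,
        b = ((((i : ℕ) + 1 : ℝ), ((i : ℕ) + 1 + n + sCount C true n : ℝ), 1), (i, true)))
    -- (ii) positive split boxes
    ∨ (∃ i : Fin n,
        b = (((1 + n + sCount C true i : ℝ), ((i : ℕ) + 1 : ℝ),
              (litCount C i true : ℝ)), (i, true)))
    ∨ (∃ i : Fin n, ∃ j : ℕ, 1 ≤ j ∧ j ≤ litCount C i true ∧
        b = (((n + sCount C true i + j : ℝ), (n + sCount C true i + j : ℝ), 1),
             (i, false)))
    -- (iii) negative split boxes
    ∨ (∃ i : Fin n,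
        b = (((1 + n + sCount C true n + sCount C false i : ℝ),
              (n + sCount C true n + (i : ℕ) + 1 : ℝ),
              (litCount C i false : ℝ)), (i, false)))
    ∨ (∃ i : Fin n, ∃ j : ℕ, 1 ≤ j ∧ j ≤ litCount C i false ∧
        b = (((n + sCount C true n + sCount C false i + j : ℝ),
              (2 * n + sCount C true n + sCount C false i + j : ℝ), 1), (i, true)))
    -- (iv) clause boxes, with I(c_h) = n + s⁺_n + s⁻_n + h (1-indexed h)
    ∨ (∃ i : Fin n, ∃ h : Fin m, (i, true) ∈ C h ∧
        b = (((n + sCount C true n + sCount C false n + (h : ℕ) + 1 : ℝ),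
              (n + sCount C true i + jpos i h : ℝ), 1), (i, true)))
    ∨ (∃ i : Fin n, ∃ h : Fin m, (i, false) ∈ C h ∧
        b = (((n + sCount C true n + sCount C false n + (h : ℕ) + 1 : ℝ),
              (2 * n + sCount C true n + sCount C false i + jneg i h : ℝ), 1),
             (i, false)))}

/-- `S` covers the bottom edge `[1, 1+n+s⁺_n+s⁻_n+m] × {1}` of the bounding box:
every such x-coordinate lies in `[x, x+w]` for some box in `S`. -/
def CoversBottomEdge {n m : ℕ} (C : Clauses n m)
    (S : Set ((ℝ × ℝ × ℝ) × (Fin n × Bool))) : Prop :=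
  ∀ x ∈ Icc (1 : ℝ) (1 + n + sCount C true n + sCount C false n + m),
    ∃ b ∈ S, x ∈ Icc b.1.1 (b.1.1 + b.1.2.2)

/-- `S` covers the left edge `{1} × [1, 1+2n+s⁺_n+s⁻_n]` of the bounding box:
every such y-coordinate lies in `[y, y+1]` for some box in `S`. -/
def CoversLeftEdge {n m : ℕ} (C : Clauses n m)
    (S : Set ((ℝ × ℝ × ℝ) × (Fin n × Bool))) : Prop :=
  ∀ y ∈ Icc (1 : ℝ) (1 + 2 * n + sCount C true n + sCount C false n),
    ∃ b ∈ S, y ∈ Icc b.1.2.1 (b.1.2.1 + 1)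

/-- `clauseCount C i` is the number of clauses with exactly `i` literals. -/
def clauseCount {n m : ℕ} (C : Clauses n m) (i : ℕ) : ℕ :=
  (Finset.univ.filter (fun h : Fin m => (C h).card = i)).card

/-!
Every box lies on an integer row `r` with `1 ≤ r ≤ R := 2n + s⁺_n + s⁻_n`, and every such row
carries a box labelled `v` and a box labelled `¬v` for one variable `v`. Counting the eight
families of boxes separately gives at most `4n + 2s⁺_n + 2s⁻_n = 2R` boxes, so the surjection
`b ↦ (row of b, sign of b)` onto `[1, R] × Bool` is a bijection. This yields the number of boxes,
since double counting literal occurrences gives `s⁺_n + s⁻_n = m₁ + 2m₂ + 3m₃`, and it shows that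
the two boxes found on row `i` are the only ones covering `(i, i + 1)`.
-/

abbrev LabelledBox (n : ℕ) := (ℝ × ℝ × ℝ) × (Fin n × Bool)

section sCount

variable {n m : ℕ} (C : Clauses n m) (s : Bool)

lemma sCount_zero : sCount C s 0 = 0 := by
  simp [sCount]

lemma sCount_mono {t t' : ℕ} (h : t ≤ t') : sCount C s t ≤ sCount C s t' :=
  sum_le_sum_of_subset fun k hk => by
    simp only [Finset.mem_filter, Finset.mem_univ, true_and] at hk ⊢
    omega

lemma sCount_succ (i : Fin n) : sCount C s (i + 1) = sCount C s i + litCount C i s := by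
  have : univ.filter (fun k : Fin n => (k : ℕ) < i + 1)
      = insert i (univ.filter fun k : Fin n => (k : ℕ) < i) := by
    ext k
    simp only [Finset.mem_filter, Finset.mem_univ, true_and, Finset.mem_insert, Fin.ext_iff]
    omega
  rw [sCount, this, sum_insert (by simp), add_comm, sCount]

lemma sCount_add_litCount_le (i : Fin n) : sCount C s i + litCount C i s ≤ sCount C s n :=
  sCount_succ C s i ▸ sCount_mono C s i.isLt

lemma sCount_self : sCount C s n = ∑ i, litCount C i s := by
  simp [sCount]

lemma exists_sCount_add_eq {t : ℕ} (ht₁ : 1 ≤ t) (ht₂ : t ≤ sCount C s n) :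
    ∃ i : Fin n, ∃ j, 1 ≤ j ∧ j ≤ litCount C i s ∧ sCount C s i + j = t := by
  suffices ∀ k ≤ n, t ≤ sCount C s k →
      ∃ i : Fin n, ∃ j, 1 ≤ j ∧ j ≤ litCount C i s ∧ sCount C s i + j = t from
    this n le_rfl ht₂
  intro k
  induction k with
  | zero =>
    intro _ h
    rw [sCount_zero] at h
    omega
  | succ k ih =>
    intro hk htk
    by_cases hle : t ≤ sCount C s k
    · exact ih (by omega) hle
    · have : sCount C s (k + 1) = sCount C s k + litCount C ⟨k, hk⟩ s :=
        sCount_succ C s ⟨k, hk⟩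
      exact ⟨⟨k, hk⟩, t - sCount C s k, by omega, by omega, by dsimp only; omega⟩

lemma sCount_true_add_sCount_false : sCount C true n + sCount C false n = ∑ h, #(C h) := by
  have := sum_card_bipartiteAbove_eq_sum_card_bipartiteBelow (r := fun l h => l ∈ C h)
    (s := (univ : Finset (Fin n × Bool))) (t := (univ : Finset (Fin m)))
  simp only [bipartiteAbove, bipartiteBelow, Fintype.sum_prod_type, Fintype.sum_bool] at this
  rw [sCount_self, sCount_self, ← sum_add_distrib]
  simpa [litCount] using this

lemma sum_card_eq_sum_mul_clauseCount {d : ℕ} (hsize : ∀ h, #(C h) ≤ d) :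
    ∑ h, #(C h) = ∑ k ∈ range (d + 1), k * clauseCount C k := by
  rw [← sum_fiberwise_of_maps_to (g := fun h => #(C h)) (t := range (d + 1))
    fun h _ => mem_range.2 (Nat.lt_succ_of_le (hsize h))]
  refine sum_congr rfl fun k _ => ?_
  rw [sum_congr rfl fun h hh => (mem_filter.1 hh).2, sum_const, smul_eq_mul, mul_comm]
  rfl

end sCount
section Boxes

variable {n m : ℕ} (C : Clauses n m) (jpos jneg : Fin n → Fin m → ℕ)

def boxFinset : Finset (LabelledBox n) :=
  univ.image (fun i : Fin n => ((((i : ℕ) + 1 : ℝ), ((i : ℕ) + 1 : ℝ), 1), (i, false)))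
  ∪ univ.image (fun i : Fin n =>
      ((((i : ℕ) + 1 : ℝ), ((i : ℕ) + 1 + n + sCount C true n : ℝ), 1), (i, true)))
  ∪ univ.image (fun i : Fin n =>
      (((1 + n + sCount C true i : ℝ), ((i : ℕ) + 1 : ℝ), (litCount C i true : ℝ)),
        (i, true)))
  ∪ (Finset.univ.sigma fun i => Finset.Icc 1 (litCount C i true)).image (fun p =>
      (((n + sCount C true p.1 + p.2 : ℝ), (n + sCount C true p.1 + p.2 : ℝ), 1), (p.1, false)))
  ∪ univ.image (fun i : Fin n =>
      (((1 + n + sCount C true n + sCount C false i : ℝ),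
        (n + sCount C true n + (i : ℕ) + 1 : ℝ), (litCount C i false : ℝ)), (i, false)))
  ∪ (Finset.univ.sigma fun i => Finset.Icc 1 (litCount C i false)).image (fun p =>
      (((n + sCount C true n + sCount C false p.1 + p.2 : ℝ),
        (2 * n + sCount C true n + sCount C false p.1 + p.2 : ℝ), 1), (p.1, true)))
  ∪ (Finset.univ.sigma fun i => Finset.univ.filter fun h => (i, true) ∈ C h).image (fun p =>
      (((n + sCount C true n + sCount C false n + (p.2 : ℕ) + 1 : ℝ),
        (n + sCount C true p.1 + jpos p.1 p.2 : ℝ), 1), (p.1, true)))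
  ∪ (Finset.univ.sigma fun i => Finset.univ.filter fun h => (i, false) ∈ C h).image (fun p =>
      (((n + sCount C true n + sCount C false n + (p.2 : ℕ) + 1 : ℝ),
        (2 * n + sCount C true n + sCount C false p.1 + jneg p.1 p.2 : ℝ), 1), (p.1, false)))

lemma coe_boxFinset : (boxFinset C jpos jneg : Set (LabelledBox n)) = boxSet C jpos jneg := by
  ext b
  simp [boxFinset, boxSet, eq_comm, and_assoc]

lemma card_boxFinset_le :
    #(boxFinset C jpos jneg) ≤ 2 * (2 * n + sCount C true n + sCount C false n) := by
  unfold boxFinset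
  repeat grw [Finset.card_union_le]
  repeat grw [Finset.card_image_le]
  simp only [card_univ, Fintype.card_fin, litCount, card_sigma, Nat.card_Icc,
    add_tsub_cancel_right, sCount_self]
  omega

lemma exists_row_of_mem_boxSet
    (hjpos : ∀ i, MapsTo (jpos i) {h | (i, true) ∈ C h} (Set.Icc 1 (litCount C i true)))
    (hjneg : ∀ i, MapsTo (jneg i) {h | (i, false) ∈ C h} (Set.Icc 1 (litCount C i false)))
    {b : LabelledBox n} (hb : b ∈ boxSet C jpos jneg) :
    ∃ r : ℕ, 1 ≤ r ∧ r ≤ 2 * n + sCount C true n + sCount C false n ∧ b.1.2.1 = r := by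
  have hpos := sCount_add_litCount_le C true
  have hneg := sCount_add_litCount_le C false
  rcases hb with ⟨i, rfl⟩ | ⟨i, rfl⟩ | ⟨i, rfl⟩ | ⟨i, j, hj₁, hj₂, rfl⟩ | ⟨i, rfl⟩ |
    ⟨i, j, hj₁, hj₂, rfl⟩ | ⟨i, h, hih, rfl⟩ | ⟨i, h, hih, rfl⟩
  · exact ⟨i + 1, by omega, by omega, by push_cast; rfl⟩
  · exact ⟨i + 1 + n + sCount C true n, by omega, by omega, by push_cast; rfl⟩
  · exact ⟨i + 1, by omega, by omega, by push_cast; rfl⟩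
  · exact ⟨n + sCount C true i + j, by omega, by have := hpos i; omega, by push_cast; rfl⟩
  · exact ⟨n + sCount C true n + i + 1, by omega, by omega, by push_cast; rfl⟩
  · exact ⟨2 * n + sCount C true n + sCount C false i + j, by omega,
      by have := hneg i; omega, by push_cast; rfl⟩
  · obtain ⟨hj₁, hj₂⟩ := hjpos i hih
    exact ⟨n + sCount C true i + jpos i h, by omega, by have := hpos i; omega,
      by push_cast; rfl⟩
  · obtain ⟨hj₁, hj₂⟩ := hjneg i hih
    exact ⟨2 * n + sCount C true n + sCount C false i + jneg i h, by omega,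
      by have := hneg i; omega, by push_cast; rfl⟩

/-- Reading the left edge upwards, the rows come in four bands: for `i = 1, …, n` the variable
box `¬v_i` beside the positive split box `v_i`; then, for each occurrence of `v_i`, a unit split
box `¬v_i` beside the clause box `v_i`; then the variable box `v_i` beside the negative split box
`¬v_i`; finally, for each occurrence of `¬v_i`, a unit split box `v_i` beside the clause box
`¬v_i`. -/
lemma exists_complementary_boxes_of_row
    (hjpos : ∀ i, SurjOn (jpos i) {h | (i, true) ∈ C h} (Set.Icc 1 (litCount C i true)))
    (hjneg : ∀ i, SurjOn (jneg i) {h | (i, false) ∈ C h} (Set.Icc 1 (litCount C i false)))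
    {r : ℕ} (hr₁ : 1 ≤ r) (hr₂ : r ≤ 2 * n + sCount C true n + sCount C false n) :
    ∃ v : Fin n, ∃ b₁ b₂ : LabelledBox n,
      b₁ ∈ boxSet C jpos jneg ∧ b₂ ∈ boxSet C jpos jneg ∧
      b₁.1.2.1 = r ∧ b₂.1.2.1 = r ∧ b₁.2 = (v, true) ∧ b₂.2 = (v, false) := by
  rcases le_or_gt r n with hr | hr
  · let i : Fin n := ⟨r - 1, by omega⟩
    refine ⟨i, (((1 + n + sCount C true i : ℝ), ((i : ℕ) + 1 : ℝ), (litCount C i true : ℝ)),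
        (i, true)), ((((i : ℕ) + 1 : ℝ), ((i : ℕ) + 1 : ℝ), 1), (i, false)),
      Or.inr <| Or.inr <| Or.inl ⟨i, rfl⟩, Or.inl ⟨i, rfl⟩, ?_, ?_, rfl, rfl⟩ <;>
    · dsimp only [i]; norm_cast; omega
  rcases le_or_gt r (n + sCount C true n) with hr' | hr'
  · obtain ⟨i, j, hj₁, hj₂, hij⟩ :=
      exists_sCount_add_eq C true (t := r - n) (by omega) (by omega)
    obtain ⟨h, hih, rfl⟩ := hjpos i ⟨hj₁, hj₂⟩
    refine ⟨i, (((n + sCount C true n + sCount C false n + (h : ℕ) + 1 : ℝ),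
        (n + sCount C true i + jpos i h : ℝ), 1), (i, true)),
      (((n + sCount C true i + jpos i h : ℝ), (n + sCount C true i + jpos i h : ℝ), 1),
        (i, false)),
      Or.inr <| Or.inr <| Or.inr <| Or.inr <| Or.inr <| Or.inr <| Or.inl ⟨i, h, hih, rfl⟩,
      Or.inr <| Or.inr <| Or.inr <| Or.inl ⟨i, _, hj₁, hj₂, rfl⟩, ?_, ?_, rfl, rfl⟩ <;>
    · dsimp only; norm_cast; omega
  rcases le_or_gt r (2 * n + sCount C true n) with hr'' | hr''
  · let i : Fin n := ⟨r - n - sCount C true n - 1, by omega⟩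
    refine ⟨i, ((((i : ℕ) + 1 : ℝ), ((i : ℕ) + 1 + n + sCount C true n : ℝ), 1), (i, true)),
      (((1 + n + sCount C true n + sCount C false i : ℝ),
        (n + sCount C true n + (i : ℕ) + 1 : ℝ), (litCount C i false : ℝ)), (i, false)),
      Or.inr <| Or.inl ⟨i, rfl⟩, Or.inr <| Or.inr <| Or.inr <| Or.inr <| Or.inl ⟨i, rfl⟩,
      ?_, ?_, rfl, rfl⟩ <;>
    · dsimp only [i]; norm_cast; omega
  · obtain ⟨i, j, hj₁, hj₂, hij⟩ :=
      exists_sCount_add_eq C false (t := r - 2 * n - sCount C true n) (by omega) (by omega)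
    obtain ⟨h, hih, rfl⟩ := hjneg i ⟨hj₁, hj₂⟩
    refine ⟨i, (((n + sCount C true n + sCount C false i + jneg i h : ℝ),
        (2 * n + sCount C true n + sCount C false i + jneg i h : ℝ), 1), (i, true)),
      (((n + sCount C true n + sCount C false n + (h : ℕ) + 1 : ℝ),
        (2 * n + sCount C true n + sCount C false i + jneg i h : ℝ), 1), (i, false)),
      Or.inr <| Or.inr <| Or.inr <| Or.inr <| Or.inr <| Or.inl ⟨i, _, hj₁, hj₂, rfl⟩,
      Or.inr <| Or.inr <| Or.inr <| Or.inr <| Or.inr <| Or.inr <| Or.inr ⟨i, h, hih, rfl⟩,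
      ?_, ?_, rfl, rfl⟩ <;>
    · dsimp only; norm_cast; omega

lemma bijOn_row_sign
    (hjpos : ∀ i, MapsTo (jpos i) {h | (i, true) ∈ C h} (Set.Icc 1 (litCount C i true)))
    (hjneg : ∀ i, MapsTo (jneg i) {h | (i, false) ∈ C h} (Set.Icc 1 (litCount C i false)))
    (hjpos' : ∀ i, SurjOn (jpos i) {h | (i, true) ∈ C h} (Set.Icc 1 (litCount C i true)))
    (hjneg' : ∀ i, SurjOn (jneg i) {h | (i, false) ∈ C h} (Set.Icc 1 (litCount C i false))) :
    BijOn (fun b : LabelledBox n => (⌊b.1.2.1⌋₊, b.2.2)) (boxFinset C jpos jneg)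
      ((Finset.Icc 1 (2 * n + sCount C true n + sCount C false n) ×ˢ Finset.univ :
        Finset (ℕ × Bool)) : Set (ℕ × Bool)) := by
  have hmaps : MapsTo (fun b : LabelledBox n => (⌊b.1.2.1⌋₊, b.2.2)) (boxFinset C jpos jneg)
      ((Finset.Icc 1 (2 * n + sCount C true n + sCount C false n) ×ˢ Finset.univ :
        Finset (ℕ × Bool)) : Set (ℕ × Bool)) := by
    intro b hb
    rw [coe_boxFinset] at hb
    obtain ⟨r, hr₁, hr₂, hy⟩ := exists_row_of_mem_boxSet C jpos jneg hjpos hjneg hb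
    simp [hy, hr₁, hr₂]
  have hsurj : SurjOn (fun b : LabelledBox n => (⌊b.1.2.1⌋₊, b.2.2)) (boxFinset C jpos jneg)
      ((Finset.Icc 1 (2 * n + sCount C true n + sCount C false n) ×ˢ Finset.univ :
        Finset (ℕ × Bool)) : Set (ℕ × Bool)) := by
    rintro ⟨r, s⟩ hr
    simp only [coe_product, coe_Icc, coe_univ, Set.mem_prod, Set.mem_Icc, Set.mem_univ,
      and_true] at hr
    obtain ⟨v, b₁, b₂, hb₁, hb₂, hy₁, hy₂, hl₁, hl₂⟩ :=
      exists_complementary_boxes_of_row C jpos jneg hjpos' hjneg' hr.1 hr.2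
    rw [← coe_boxFinset] at hb₁ hb₂
    cases s
    · exact ⟨b₂, hb₂, by simp [hy₂, hl₂]⟩
    · exact ⟨b₁, hb₁, by simp [hy₁, hl₁]⟩
  refine ⟨hmaps, injOn_of_surjOn_of_card_le _ hmaps hsurj ?_, hsurj⟩
  simpa [mul_comm] using card_boxFinset_le C jpos jneg

end Boxes

lemma le_and_le_of_Ioo_subset_Icc {α : Type*} [LinearOrder α] [TopologicalSpace α]
    [OrderTopology α] [DenselyOrdered α] {a b c d : α} (hab : a < b) (h : Ioo a b ⊆ Icc c d) :
    c ≤ a ∧ b ≤ d :=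
  (Set.Icc_subset_Icc_iff hab.le).1 (closure_Ioo hab.ne ▸ closure_minimal h isClosed_Icc)

theorem boxProblem_count_and_left_edge_general
    (n m : ℕ) (C : Clauses n m)
    (hsize : ∀ h : Fin m, (C h).card ≤ 3)
    (jpos jneg : Fin n → Fin m → ℕ)
    (hjpos : ∀ i : Fin n,
      Set.BijOn (jpos i) {h : Fin m | (i, true) ∈ C h} (Set.Icc 1 (litCount C i true)))
    (hjneg : ∀ i : Fin n,
      Set.BijOn (jneg i) {h : Fin m | (i, false) ∈ C h} (Set.Icc 1 (litCount C i false))) :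
    ((boxSet C jpos jneg).ncard
        = 4 * n + 2 * (clauseCount C 1 + 2 * clauseCount C 2 + 3 * clauseCount C 3) ∧
      4 * n + 2 * (clauseCount C 1 + 2 * clauseCount C 2 + 3 * clauseCount C 3)
        = 2 * (2 * n + clauseCount C 1 + 2 * clauseCount C 2 + 3 * clauseCount C 3)) ∧
    ∀ i : ℕ, 1 ≤ i → i ≤ 2 * n + sCount C true n + sCount C false n →
      ∃ v : Fin n, ∃ b1 b2 : (ℝ × ℝ × ℝ) × (Fin n × Bool),
        b1 ∈ boxSet C jpos jneg ∧ b2 ∈ boxSet C jpos jneg ∧ b1 ≠ b2 ∧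
        Set.Ioo (i : ℝ) (i + 1) ⊆ Set.Icc b1.1.2.1 (b1.1.2.1 + 1) ∧
        Set.Ioo (i : ℝ) (i + 1) ⊆ Set.Icc b2.1.2.1 (b2.1.2.1 + 1) ∧
        b1.2 = (v, true) ∧ b2.2 = (v, false) ∧
        ∀ b ∈ boxSet C jpos jneg,
          Set.Ioo (i : ℝ) (i + 1) ⊆ Set.Icc b.1.2.1 (b.1.2.1 + 1) → b = b1 ∨ b = b2 := by
  have hliterals : sCount C true n + sCount C false n
      = clauseCount C 1 + 2 * clauseCount C 2 + 3 * clauseCount C 3 := by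
    rw [sCount_true_add_sCount_false, sum_card_eq_sum_mul_clauseCount C hsize]
    simp [sum_range_succ]
  have hbij := bijOn_row_sign C jpos jneg (fun i => (hjpos i).mapsTo) (fun i => (hjneg i).mapsTo)
    (fun i => (hjpos i).surjOn) (fun i => (hjneg i).surjOn)
  have hcard :
      (boxSet C jpos jneg).ncard = 2 * (2 * n + sCount C true n + sCount C false n) := by
    rw [← coe_boxFinset, ncard_coe_finset, hbij.finsetCard_eq]
    simp [mul_comm]
  refine ⟨⟨by omega, by ring⟩, fun i hi₁ hi₂ => ?_⟩
  obtain ⟨v, b₁, b₂, hb₁, hb₂, hy₁, hy₂, hl₁, hl₂⟩ := exists_complementary_boxes_of_row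
    C jpos jneg (fun i => (hjpos i).surjOn) (fun i => (hjneg i).surjOn) hi₁ hi₂
  refine ⟨v, b₁, b₂, hb₁, hb₂, fun h => by simp [h, hl₂] at hl₁, hy₁ ▸ Ioo_subset_Icc_self,
    hy₂ ▸ Ioo_subset_Icc_self, hl₁, hl₂, fun b hb hcov => ?_⟩
  have hy : b.1.2.1 = i := by
    have := le_and_le_of_Ioo_subset_Icc (by linarith) hcov
    linarith
  rw [← coe_boxFinset] at hb hb₁ hb₂
  cases hs : b.2.2
  · exact .inr <| hbij.injOn hb hb₂ (by simp [hy, hy₂, hs, hl₂])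
  · exact .inl <| hbij.injOn hb hb₁ (by simp [hy, hy₁, hs, hl₁])

/-- In the box-problem construction, the total number of boxes equals
`4n + 2(m₁ + 2m₂ + 3m₃) = 2k` where `k = 2n + m₁ + 2m₂ + 3m₃`; moreover every unit
interval `(i, i+1)` with `i ∈ {1, …, 2n+s⁺_n+s⁻_n}` on the left edge of the
bounding box can be covered by exactly two boxes, one labelled `v` and the other
labelled `¬v` for the same variable `v`. -/
theorem boxProblem_count_and_left_edge
    (n m : ℕ) (C : Clauses n m)
    (hsize : ∀ h : Fin m, (C h).card ≤ 3)
    (hne : ∀ h : Fin m, (C h).Nonempty)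
    (hocc : ∀ i : Fin n, (∃ h : Fin m, (i, true) ∈ C h) ∧ (∃ h : Fin m, (i, false) ∈ C h))
    (jpos jneg : Fin n → Fin m → ℕ)
    (hjpos : ∀ i : Fin n,
      Set.BijOn (jpos i) {h : Fin m | (i, true) ∈ C h} (Set.Icc 1 (litCount C i true)))
    (hjneg : ∀ i : Fin n,
      Set.BijOn (jneg i) {h : Fin m | (i, false) ∈ C h} (Set.Icc 1 (litCount C i false))) :
    ((boxSet C jpos jneg).ncard
        = 4 * n + 2 * (clauseCount C 1 + 2 * clauseCount C 2 + 3 * clauseCount C 3) ∧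
      4 * n + 2 * (clauseCount C 1 + 2 * clauseCount C 2 + 3 * clauseCount C 3)
        = 2 * (2 * n + clauseCount C 1 + 2 * clauseCount C 2 + 3 * clauseCount C 3)) ∧
    ∀ i : ℕ, 1 ≤ i → i ≤ 2 * n + sCount C true n + sCount C false n →
      ∃ v : Fin n, ∃ b1 b2 : (ℝ × ℝ × ℝ) × (Fin n × Bool),
        b1 ∈ boxSet C jpos jneg ∧ b2 ∈ boxSet C jpos jneg ∧ b1 ≠ b2 ∧
        Set.Ioo (i : ℝ) (i + 1) ⊆ Set.Icc b1.1.2.1 (b1.1.2.1 + 1) ∧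
        Set.Ioo (i : ℝ) (i + 1) ⊆ Set.Icc b2.1.2.1 (b2.1.2.1 + 1) ∧
        b1.2 = (v, true) ∧ b2.2 = (v, false) ∧
        ∀ b ∈ boxSet C jpos jneg,
          Set.Ioo (i : ℝ) (i + 1) ⊆ Set.Icc b.1.2.1 (b.1.2.1 + 1) → b = b1 ∨ b = b2 :=
  boxProblem_count_and_left_edge_general n m C hsize jpos jneg hjpos hjneg
end
end
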